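/- arXiv:2305.01304 — 2 statements merged into one kernel-verified Lean document; each statement's English description precedes it below -/
import Mathlib

section
/- Let p be a prime number, let N ≥ 1, and let R be a finite commutative ring of characteristic p with exactly p^N elements. Let n, r ≥ 1 and let f_1, …, f_r ∈ R[t_1, …, t_n] be polynomials each of total degree at least 1. Let Z := {x ∈ R^n : f_1(x) = ⋯ = f_r(x) = 0}. Then p^β divides #Z, where β := max(0, ⌈ N·(n − Σ_{j=1}^r deg(f_j)) / max_{j=1}^r deg(f_j) ⌉). -/
/-!
Choosing a basis of `R` over `𝔽_p` turns the `r` equations in `n` unknowns over `R` into `N r`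
equations in `N n` unknowns over `𝔽_p`, of no larger degrees (Weil restriction). Over `𝔽_p`, with
`D` the maximal degree, Ax–Katz says that `p ^ (k + 1)` divides the number of common zeros as soon
as `k D + ∑ deg < #variables`; take `k + 1 = ⌈N (n - ∑ deg) / D⌉`.

For Ax–Katz over `𝔽_p`, work in `ℤ/p^(k+1)` with the Teichmüller map `T`. Let `q = (p - 1) p ^ k`
and let `G(x)` be the sum of the lifts `T(c_m x^m)` of the terms of `g`. As `G(x) ≡ g(x) mod p`,
`G(x) ^ q` is `0` or `1` according as `g(x) = 0` or not, so the number of common zeros is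
`∑_x ∏_j (1 - G_j(x) ^ q)` mod `p ^ (k + 1)`. The multinomial expansion writes this as a sum of
multinomial coefficients times products of power sums `∑_y T(y) ^ a`; these vanish unless
`p - 1 ∣ a`, and equal `p` for `a = 0`. By Legendre's formula the `p`-adic valuation of a
multinomial coefficient is a defect of base-`p` digit sums, and the degree bound forces this
valuation plus the number of power sums equal to `p` up to `k + 1`.
-/

open Finset

namespace Nat

variable {p : ℕ} [hp : Fact p.Prime]

theorem sub_one_mul_padicValNat_multinomial_add_digits_sum {α : Type*} (s : Finset α)
    (k : α → ℕ) :
    (p - 1) * padicValNat p (multinomial s k) + (p.digits (∑ i ∈ s, k i)).sum =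
      ∑ i ∈ s, (p.digits (k i)).sum := by
  have legendre (n : ℕ) : (p - 1) * padicValNat p n ! + (p.digits n).sum = n := by
    rw [sub_one_mul_padicValNat_factorial, Nat.sub_add_cancel (digit_sum_le p n)]
  have hval : ∑ i ∈ s, padicValNat p (k i)! + padicValNat p (multinomial s k) =
      padicValNat p (∑ i ∈ s, k i)! := by
    rw [← multinomial_spec, padicValNat.mul (prod_ne_zero_iff.2 fun i _ => factorial_ne_zero _)
      (multinomial_pos s k).ne', ← factorization_def (∏ i ∈ s, _) hp.out,
      factorization_prod_apply fun i _ => factorial_ne_zero _]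
    simp only [factorization_def _ hp.out]
  have := congrArg ((p - 1) * ·) hval
  simp only [Nat.mul_add, mul_sum] at this
  have hsum := legendre (∑ i ∈ s, k i)
  conv_rhs at hsum => rw [← sum_congr rfl fun i _ => legendre (k i), sum_add_distrib]
  omega

theorem digits_sum_sum_le {α : Type*} (s : Finset α) (k : α → ℕ) :
    (p.digits (∑ i ∈ s, k i)).sum ≤ ∑ i ∈ s, (p.digits (k i)).sum :=
  (sub_one_mul_padicValNat_multinomial_add_digits_sum s k).le.trans' le_add_self

theorem digits_sum_mul_le (n a : ℕ) : (p.digits (n * a)).sum ≤ n * (p.digits a).sum := by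
  simpa using digits_sum_sum_le (p := p) (range n) fun _ => a

theorem digits_sum_sub_one_mul_pow {b : ℕ} (hb : 1 < b) (k : ℕ) :
    (b.digits ((b - 1) * b ^ k)).sum = b - 1 := by
  rw [mul_comm, digits_base_pow_mul hb (by omega), digits_of_lt b (b - 1) (by omega) (by omega)]
  simp

theorem sub_one_le_digits_sum_of_dvd {b n : ℕ} (hb : 1 < b) (hn : n ≠ 0) (h : b - 1 ∣ n) :
    b - 1 ≤ (b.digits n).sum := by
  have hpos : 0 < (b.digits n).sum := (pos_of_ne_zero (getLast_digit_ne_zero b hn)).trans_le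
    (List.le_sum_of_mem (List.getLast_mem _))
  obtain ⟨c, rfl⟩ : ∃ c, b = c + 2 := ⟨b - 2, by omega⟩
  obtain rfl | hc := c.eq_zero_or_pos
  · exact hpos
  have hmod : (c + 2) % (c + 2 - 1) = 1 := by
    rw [show c + 2 - 1 = c + 1 by omega, show c + 2 = c + 1 + 1 by omega, Nat.add_mod_left,
      Nat.mod_eq_of_lt (by omega)]
  exact le_of_dvd hpos (((modEq_digits_sum _ _ hmod n).dvd_iff dvd_rfl).1 h)

theorem sum_digits_sum_le_of_mem_piAntidiag {α : Type*} [DecidableEq α] {s : Finset α} {k : ℕ}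
    {K : α → ℕ} (hK : K = 0 ∨ K ∈ piAntidiag s ((p - 1) * p ^ k)) :
    ∑ i ∈ s, (p.digits (K i)).sum ≤ (p - 1) * (padicValNat p (multinomial s K) + 1) := by
  obtain rfl | hK := hK
  · simp
  rw [← sub_one_mul_padicValNat_multinomial_add_digits_sum, (mem_piAntidiag.1 hK).1,
    digits_sum_sub_one_mul_pow hp.out.one_lt, Nat.mul_add_one]

theorem sub_one_mul_card_le_sum_digits_sum {b : ℕ} (hb : 1 < b) {κ : Type*} [Fintype κ]
    {A : κ → ℕ} (hA : ∀ v, A v ≠ 0 → b - 1 ∣ A v) :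
    (b - 1) * #{v | A v ≠ 0} ≤ ∑ v, (b.digits (A v)).sum := by
  calc (b - 1) * #{v | A v ≠ 0} = ∑ v with A v ≠ 0, (b - 1) := by
        rw [sum_const, smul_eq_mul, mul_comm]
    _ ≤ ∑ v with A v ≠ 0, (b.digits (A v)).sum := sum_le_sum fun v hv =>
        sub_one_le_digits_sum_of_dvd hb (mem_filter.1 hv).2 (hA v (mem_filter.1 hv).2)
    _ ≤ ∑ v, (b.digits (A v)).sum := sum_le_sum_of_subset (filter_subset _ _)

theorem sum_digits_sum_sum_le {ι κ : Type*} [Fintype ι] [Fintype κ] (S : ι → Finset (κ →₀ ℕ))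
    (e : ι → ℕ) (hS : ∀ j, ∀ m ∈ S j, ∑ v, m v ≤ e j) (K : ι → (κ →₀ ℕ) → ℕ) :
    ∑ v, (p.digits (∑ j, ∑ m ∈ S j, m v * K j m)).sum ≤
      ∑ j, e j * ∑ m ∈ S j, (p.digits (K j m)).sum := by
  calc ∑ v, (p.digits (∑ j, ∑ m ∈ S j, m v * K j m)).sum
      ≤ ∑ v, ∑ j, ∑ m ∈ S j, m v * (p.digits (K j m)).sum := by
        gcongr with v
        refine (digits_sum_sum_le _ _).trans (sum_le_sum fun j _ => ?_)
        exact (digits_sum_sum_le _ _).trans (sum_le_sum fun m _ => digits_sum_mul_le _ _)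
    _ = ∑ j, ∑ m ∈ S j, (∑ v, m v) * (p.digits (K j m)).sum := by
        simp only [sum_mul]
        rw [sum_comm]
        exact sum_congr rfl fun j _ => sum_comm
    _ ≤ ∑ j, e j * ∑ m ∈ S j, (p.digits (K j m)).sum := by
        simp only [mul_sum]
        gcongr with j _ m hm
        exact hS j m hm

theorem succ_le_sum_padicValNat_multinomial_add_card {k : ℕ} {ι κ : Type*} [Fintype ι]
    [Fintype κ] [DecidableEq κ] (S : ι → Finset (κ →₀ ℕ)) (e : ι → ℕ) {D : ℕ} (hD : 0 < D)
    (hS : ∀ j, ∀ m ∈ S j, ∑ v, m v ≤ e j) (heD : ∀ j, e j ≤ D)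
    (hM : k * D + ∑ j, e j < Fintype.card κ) (K : ι → (κ →₀ ℕ) → ℕ)
    (hK : ∀ j, K j = 0 ∨ K j ∈ piAntidiag (S j) ((p - 1) * p ^ k))
    (hA : ∀ v, ∑ j, ∑ m ∈ S j, m v * K j m ≠ 0 → p - 1 ∣ ∑ j, ∑ m ∈ S j, m v * K j m) :
    k + 1 ≤ ∑ j, padicValNat p (multinomial (S j) (K j)) +
      #{v | ∑ j, ∑ m ∈ S j, m v * K j m = 0} := by
  set A : κ → ℕ := fun v => ∑ j, ∑ m ∈ S j, m v * K j m
  set V := ∑ j, padicValNat p (multinomial (S j) (K j))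
  have hp1 : 0 < p - 1 := Nat.sub_pos_of_lt hp.out.one_lt
  have hcard : #{v | A v = 0} + #{v | A v ≠ 0} = Fintype.card κ :=
    card_filter_add_card_filter_not _
  have hdigits : (p - 1) * #{v | A v ≠ 0} ≤
      (p - 1) * ∑ j, e j * (padicValNat p (multinomial (S j) (K j)) + 1) :=
    calc (p - 1) * #{v | A v ≠ 0} ≤ ∑ v, (p.digits (A v)).sum :=
          sub_one_mul_card_le_sum_digits_sum hp.out.one_lt hA
      _ ≤ ∑ j, e j * ∑ m ∈ S j, (p.digits (K j m)).sum := sum_digits_sum_sum_le S e hS K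
      _ ≤ ∑ j, e j * ((p - 1) * (padicValNat p (multinomial (S j) (K j)) + 1)) := by
          gcongr with j
          exact sum_digits_sum_le_of_mem_piAntidiag (hK j)
      _ = _ := by rw [mul_sum]; exact sum_congr rfl fun j _ => by ring
  have hzeros : #{v | A v ≠ 0} ≤ ∑ j, e j + D * V :=
    calc #{v | A v ≠ 0} ≤ ∑ j, e j * (padicValNat p (multinomial (S j) (K j)) + 1) :=
          Nat.le_of_mul_le_mul_left hdigits hp1
      _ ≤ ∑ j, (e j + D * padicValNat p (multinomial (S j) (K j))) := by
          gcongr with j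
          nlinarith [Nat.mul_le_mul_right (padicValNat p (multinomial (S j) (K j))) (heD j)]
      _ = ∑ j, e j + D * V := by rw [sum_add_distrib, mul_sum]
  have hkD : k * D < #{v | A v = 0} + D * V := by omega
  show k + 1 ≤ V + #{v | A v = 0}
  by_contra! h
  nlinarith [Nat.mul_le_mul_left D (Nat.le_of_lt_succ h), Nat.le_mul_of_pos_left #{v | A v = 0} hD]

end Nat

namespace ZMod

variable {p : ℕ} [hp : Fact p.Prime] {k : ℕ}

local notation "π" => ZMod.castHom (dvd_pow_self p (Nat.succ_ne_zero k)) (ZMod p)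

omit hp in
theorem intCast_pow_eq_of_dvd_sub {a b : ℤ} (h : (p : ℤ) ∣ a - b) :
    (a : ZMod (p ^ (k + 1))) ^ p ^ k = (b : ZMod (p ^ (k + 1))) ^ p ^ k := by
  have h' : (p : ZMod (p ^ (k + 1))) ∣ (a : ZMod (p ^ (k + 1))) - b := by
    simpa using map_dvd (Int.castRingHom (ZMod (p ^ (k + 1)))) h
  have := dvd_sub_pow_of_dvd_sub h' k
  rwa [← Nat.cast_pow, natCast_self, zero_dvd_iff, sub_eq_zero] at this

variable (p k) in
noncomputable def teichmuller : ZMod p →*₀ ZMod (p ^ (k + 1)) where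
  toFun x := (x.val : ZMod (p ^ (k + 1))) ^ p ^ k
  map_zero' := by simp [hp.out.ne_zero]
  map_one' := by simp [val_one]
  map_mul' x y := by
    rw [← mul_pow, ← Nat.cast_mul, ← Int.cast_natCast, ← Int.cast_natCast (x.val * y.val)]
    refine intCast_pow_eq_of_dvd_sub ?_
    rw [val_mul]
    exact (Nat.mod_modEq _ p).symm.dvd

theorem teichmuller_apply (x : ZMod p) :
    teichmuller p k x = (x.val : ZMod (p ^ (k + 1))) ^ p ^ k := rfl

theorem castHom_teichmuller (x : ZMod p) : π (teichmuller p k x) = x := by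
  rw [teichmuller_apply, map_pow, map_natCast, natCast_zmod_val, pow_card_pow]

theorem castHom_eq_natCast_val (w : ZMod (p ^ (k + 1))) : π w = w.val := by
  rw [castHom_apply, cast_eq_val]

theorem isUnit_of_castHom_ne_zero {w : ZMod (p ^ (k + 1))} (hw : π w ≠ 0) : IsUnit w := by
  rw [castHom_eq_natCast_val, Ne, natCast_eq_zero_iff] at hw
  rw [← natCast_zmod_val w, isUnit_iff_coprime]
  exact ((hp.out.coprime_iff_not_dvd.2 hw).pow_left _).symm

theorem pow_succ_eq_zero_of_castHom_eq_zero {w : ZMod (p ^ (k + 1))} (hw : π w = 0) :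
    w ^ (k + 1) = 0 := by
  rw [castHom_eq_natCast_val, natCast_eq_zero_iff] at hw
  obtain ⟨c, hc⟩ := hw
  rw [← natCast_zmod_val w, hc, Nat.cast_mul, mul_pow, ← Nat.cast_pow, natCast_self, zero_mul]

theorem pow_sub_one_mul_pow_eq_one {w : ZMod (p ^ (k + 1))} (hw : IsUnit w) :
    w ^ ((p - 1) * p ^ k) = 1 := by
  have := congrArg Units.val (pow_totient hw.unit)
  rwa [Nat.totient_prime_pow_succ hp.out, mul_comm, Units.val_pow_eq_pow_val, IsUnit.unit_spec,
    Units.val_one] at this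

theorem sum_teichmuller_pow_of_not_dvd {a : ℕ} (ha : ¬ p - 1 ∣ a) :
    ∑ y : ZMod p, teichmuller p k y ^ a = 0 := by
  obtain ⟨g, hg⟩ := IsCyclic.exists_generator (α := (ZMod p)ˣ)
  have hfixed : teichmuller p k g ^ a * ∑ y, teichmuller p k y ^ a =
      ∑ y, teichmuller p k y ^ a := by
    simp_rw [mul_sum, ← mul_pow, ← map_mul]
    exact Fintype.sum_equiv (Equiv.mulLeft₀ _ g.ne_zero) _ _ fun _ => rfl
  have hunit : IsUnit (teichmuller p k g ^ a - 1) := by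
    refine isUnit_of_castHom_ne_zero ?_
    rw [map_sub, map_pow, castHom_teichmuller, map_one, sub_ne_zero]
    intro hga
    apply ha
    rw [← card_units p, ← Nat.card_eq_fintype_card, ← orderOf_eq_card_of_forall_mem_zpowers hg]
    exact orderOf_dvd_of_pow_eq_one (Units.ext (by simpa using hga))
  rw [← hunit.mul_right_eq_zero, sub_mul, one_mul, hfixed, sub_self]

theorem pow_card_dvd_prod_sum_teichmuller_pow {κ : Type*} [Fintype κ] (A : κ → ℕ) :
    (p : ZMod (p ^ (k + 1))) ^ #{v | A v = 0} ∣ ∏ v, ∑ y : ZMod p, teichmuller p k y ^ A v := by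
  rw [← prod_filter_mul_prod_filter_not univ fun v => A v = 0]
  refine dvd_mul_of_dvd_left (dvd_of_eq ?_) _
  rw [prod_congr rfl fun v hv => by rw [(mem_filter.1 hv).2], prod_const]
  simp [card_univ, ZMod.card]

theorem sum_teichmuller_mul_prod_pow {κ : Type*} [Fintype κ] [DecidableEq κ] (c : ZMod p)
    (A : κ → ℕ) :
    ∑ x : κ → ZMod p, teichmuller p k (c * ∏ v, x v ^ A v) =
      teichmuller p k c * ∏ v, ∑ y : ZMod p, teichmuller p k y ^ A v := by
  simp only [map_mul, map_prod, map_pow, ← mul_sum]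
  rw [← Fintype.piFinset_univ, prod_univ_sum]

end ZMod

theorem Finset.prod_prod_pow_monomial {M ι κ : Type*} [CommMonoid M] [Fintype ι] [Fintype κ]
    (S : ι → Finset (κ →₀ ℕ)) (c : ι → (κ →₀ ℕ) → M) (K : ι → (κ →₀ ℕ) → ℕ) (x : κ → M) :
    ∏ j, ∏ m ∈ S j, (c j m * ∏ v, x v ^ m v) ^ K j m =
      (∏ j, ∏ m ∈ S j, c j m ^ K j m) * ∏ v, x v ^ ∑ j, ∑ m ∈ S j, m v * K j m := by
  simp only [mul_pow, prod_mul_distrib, ← prod_pow, ← pow_mul, ← prod_pow_eq_pow_sum]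
  rw [prod_comm (s := univ) (t := univ)]
  simp only [prod_comm (s := univ) (t := S _)]

namespace MvPolynomial

section TeichmullerEval

open ZMod

variable {p : ℕ} [hp : Fact p.Prime] {k : ℕ} {κ : Type*} [Fintype κ]

local notation "π" => ZMod.castHom (dvd_pow_self p (Nat.succ_ne_zero k)) (ZMod p)

variable (k) in
noncomputable def teichmullerEval (g : MvPolynomial κ (ZMod p)) (x : κ → ZMod p) :
    ZMod (p ^ (k + 1)) :=
  ∑ m ∈ g.support, teichmuller p k (coeff m g * ∏ v, x v ^ m v)

theorem castHom_teichmullerEval (g : MvPolynomial κ (ZMod p)) (x : κ → ZMod p) :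
    π (teichmullerEval k g x) = eval x g := by
  simp only [teichmullerEval, map_sum, castHom_teichmuller, eval_eq']

theorem teichmullerEval_pow (g : MvPolynomial κ (ZMod p)) (x : κ → ZMod p) :
    teichmullerEval k g x ^ ((p - 1) * p ^ k) = if eval x g = 0 then 0 else 1 := by
  split_ifs with hx
  · have hk : k + 1 ≤ (p - 1) * p ^ k :=
      (Nat.lt_pow_self hp.out.one_lt).trans_le
        (Nat.le_mul_of_pos_left _ (Nat.sub_pos_of_lt hp.out.one_lt))
    refine pow_eq_zero_of_le hk (pow_succ_eq_zero_of_castHom_eq_zero ?_)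
    rw [castHom_teichmullerEval, hx]
  · refine pow_sub_one_mul_pow_eq_one (isUnit_of_castHom_ne_zero ?_)
    rwa [castHom_teichmullerEval]

theorem natCast_card_zeros [DecidableEq κ] {ι : Type*} [Fintype ι]
    (g : ι → MvPolynomial κ (ZMod p)) :
    (Nat.card {x : κ → ZMod p // ∀ j, eval x (g j) = 0} : ZMod (p ^ (k + 1))) =
      ∑ x, ∏ j, (1 - teichmullerEval k (g j) x ^ ((p - 1) * p ^ k)) := by
  classical
  have hind (x : κ → ZMod p) (j : ι) :
      1 - teichmullerEval k (g j) x ^ ((p - 1) * p ^ k) = if eval x (g j) = 0 then 1 else 0 := by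
    rw [teichmullerEval_pow]; split_ifs <;> simp
  simp only [hind, prod_boole, mem_univ, true_implies, sum_boole, Nat.card_eq_fintype_card,
    Fintype.card_subtype]

/-- The index `K = 0` carries the constant `1`. -/
theorem one_sub_teichmullerEval_pow [DecidableEq κ] [DecidableEq ((κ →₀ ℕ) → ℕ)]
    (g : MvPolynomial κ (ZMod p)) (x : κ → ZMod p) :
    1 - teichmullerEval k g x ^ ((p - 1) * p ^ k) =
      ∑ K ∈ insert 0 (piAntidiag g.support ((p - 1) * p ^ k)),
        (if K = 0 then 1 else -1) * Nat.multinomial g.support K *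
          teichmuller p k (∏ m ∈ g.support, (coeff m g * ∏ v, x v ^ m v) ^ K m) := by
  have hq : (p - 1) * p ^ k ≠ 0 :=
    mul_ne_zero (Nat.sub_ne_zero_of_lt hp.out.one_lt) (pow_ne_zero _ hp.out.ne_zero)
  have h0 : (0 : (κ →₀ ℕ) → ℕ) ∉ piAntidiag g.support ((p - 1) * p ^ k) := by
    simpa [mem_piAntidiag] using hq.symm
  rw [sum_insert h0, teichmullerEval, sum_pow_eq_sum_piAntidiag, sub_eq_add_neg,
    ← sum_neg_distrib]
  congr 1
  · simp [Nat.multinomial]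
  · refine sum_congr rfl fun K hK => ?_
    rw [if_neg (ne_of_mem_of_not_mem hK h0), map_prod]
    simp only [map_pow]
    ring

theorem natCast_prod_multinomial_mul_prod_sum_teichmuller_pow_eq_zero {ι : Type*} [Fintype ι]
    [DecidableEq κ] (g : ι → MvPolynomial κ (ZMod p)) (e : ι → ℕ) {D : ℕ} (hD : 0 < D)
    (hdeg : ∀ j, (g j).totalDegree ≤ e j) (heD : ∀ j, e j ≤ D)
    (hM : k * D + ∑ j, e j < Fintype.card κ) (K : ι → (κ →₀ ℕ) → ℕ)
    (hK : ∀ j, K j = 0 ∨ K j ∈ piAntidiag (g j).support ((p - 1) * p ^ k)) :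
    ((∏ j, Nat.multinomial (g j).support (K j) : ℕ) : ZMod (p ^ (k + 1))) *
      ∏ v, ∑ y : ZMod p, teichmuller p k y ^ ∑ j, ∑ m ∈ (g j).support, m v * K j m = 0 := by
  by_cases hA : ∀ v, ∑ j, ∑ m ∈ (g j).support, m v * K j m ≠ 0 →
      p - 1 ∣ ∑ j, ∑ m ∈ (g j).support, m v * K j m
  · have hS (j) (m) (hm : m ∈ (g j).support) : ∑ v, m v ≤ e j := by
      rw [← Finsupp.sum_fintype m (fun _ e => e) fun _ => rfl]
      exact (le_totalDegree hm).trans (hdeg j)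
    have hle := Nat.succ_le_sum_padicValNat_multinomial_add_card _ e hD hS heD hM K hK hA
    have hmult :
        (p : ZMod (p ^ (k + 1))) ^ ∑ j, padicValNat p (Nat.multinomial (g j).support (K j)) ∣
          ((∏ j, Nat.multinomial (g j).support (K j) : ℕ) : ZMod (p ^ (k + 1))) := by
      rw [← Nat.cast_pow, ← prod_pow_eq_pow_sum]
      exact Nat.cast_dvd_cast (prod_dvd_prod_of_dvd _ _ fun j _ => pow_padicValNat_dvd)
    have hzero : (p : ZMod (p ^ (k + 1))) ^ (k + 1) = 0 := by
      rw [← Nat.cast_pow, natCast_self]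
    refine eq_zero_of_zero_dvd (hzero ▸ (pow_dvd_pow _ hle).trans ?_)
    exact (pow_add _ _ _).dvd.trans
      (mul_dvd_mul hmult (pow_card_dvd_prod_sum_teichmuller_pow _))
  · push Not at hA
    obtain ⟨v, hv, hvd⟩ := hA
    rw [prod_eq_zero (mem_univ v) (sum_teichmuller_pow_of_not_dvd hvd), mul_zero]

theorem pow_succ_dvd_card_zeros {ι : Type*} [Fintype ι] [DecidableEq κ]
    (g : ι → MvPolynomial κ (ZMod p)) (e : ι → ℕ) {D : ℕ} (hD : 0 < D)
    (hdeg : ∀ j, (g j).totalDegree ≤ e j) (heD : ∀ j, e j ≤ D)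
    (hM : k * D + ∑ j, e j < Fintype.card κ) :
    p ^ (k + 1) ∣ Nat.card {x : κ → ZMod p // ∀ j, eval x (g j) = 0} := by
  classical
  rw [← ZMod.natCast_eq_zero_iff, natCast_card_zeros (k := k)]
  simp_rw [one_sub_teichmullerEval_pow, prod_univ_sum]
  rw [sum_comm]
  refine sum_eq_zero fun K hK => ?_
  have hK' (j : ι) := mem_insert.1 (Fintype.mem_piFinset.1 hK j)
  simp_rw [prod_mul_distrib, ← map_prod, prod_prod_pow_monomial, ← mul_sum,
    sum_teichmuller_mul_prod_pow]
  rw [← Nat.cast_prod, mul_mul_mul_comm,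
    natCast_prod_multinomial_mul_prod_sum_teichmuller_pow_eq_zero g e hD hdeg heD hM K hK',
    mul_zero]

end TeichmullerEval

theorem totalDegree_bind₁_le {R σ τ : Type*} [CommSemiring R] {s : σ → MvPolynomial τ R}
    (hs : ∀ i, (s i).totalDegree ≤ 1) (φ : MvPolynomial σ R) :
    (bind₁ s φ).totalDegree ≤ φ.totalDegree := by
  conv_lhs => rw [φ.as_sum]
  rw [map_sum]
  refine (totalDegree_finsetSum _ _).trans (Finset.sup_le fun _ hm => ?_)
  rw [bind₁_monomial]
  refine (totalDegree_mul _ _).trans ?_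
  rw [totalDegree_C, zero_add]
  refine (totalDegree_finsetProd _ _).trans ((sum_le_sum fun i _ =>
    (totalDegree_pow _ _).trans (Nat.mul_le_mul_left _ (hs i))).trans ?_)
  simp only [mul_one]
  exact le_totalDegree hm

variable {K R τ : Type*} [CommSemiring K] [CommSemiring R] [Algebra K R]

noncomputable def mapCoeffs (ℓ : R →ₗ[K] K) (h : MvPolynomial τ R) : MvPolynomial τ K :=
  ∑ m ∈ h.support, monomial m (ℓ (coeff m h))

theorem totalDegree_mapCoeffs_le (ℓ : R →ₗ[K] K) (h : MvPolynomial τ R) :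
    (mapCoeffs ℓ h).totalDegree ≤ h.totalDegree :=
  (totalDegree_finsetSum _ _).trans
    (Finset.sup_le fun _ hm => (totalDegree_monomial_le _ _).trans (le_totalDegree hm))

theorem apply_eval_algebraMap_comp (ℓ : R →ₗ[K] K) (y : τ → K) (h : MvPolynomial τ R) :
    ℓ (eval (algebraMap K R ∘ y) h) = eval y (mapCoeffs ℓ h) := by
  rw [eval_eq, mapCoeffs, map_sum, map_sum]
  refine sum_congr rfl fun m _ => ?_
  simp only [Function.comp_apply, ← map_pow, ← map_prod, eval_monomial, Finsupp.prod]
  rw [← Algebra.commutes, ← Algebra.smul_def, map_smul, smul_eq_mul, mul_comm]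

theorem eval_bind₁ {σ : Type*} (z : τ → R) (s : σ → MvPolynomial τ R) (φ : MvPolynomial σ R) :
    eval z (bind₁ s φ) = eval (fun i => eval z (s i)) φ :=
  eval₂Hom_bind₁ _ _ _ _

section WeilRestriction

variable {σ ι : Type*} [Fintype ι] (b : Module.Basis ι K R)

noncomputable def weilRestriction (f : MvPolynomial σ R) (l : ι) : MvPolynomial (σ × ι) K :=
  mapCoeffs (b.coord l) (bind₁ (fun i => ∑ l', C (b l') * X (i, l')) f)

theorem totalDegree_weilRestriction_le (f : MvPolynomial σ R) (l : ι) :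
    (weilRestriction b f l).totalDegree ≤ f.totalDegree := by
  refine (totalDegree_mapCoeffs_le _ _).trans (totalDegree_bind₁_le (fun i => ?_) f)
  refine (totalDegree_finsetSum _ _).trans (Finset.sup_le fun l' _ => ?_)
  rw [C_mul_X_eq_monomial]
  exact (totalDegree_monomial_le _ _).trans (by simp)

theorem eval_weilRestriction (f : MvPolynomial σ R) (l : ι) (y : σ × ι → K) :
    eval y (weilRestriction b f l) = b.coord l (eval (fun i => ∑ l', y (i, l') • b l') f) := by
  rw [weilRestriction, ← apply_eval_algebraMap_comp, eval_bind₁]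
  congr
  funext i
  simp [Algebra.smul_def, mul_comm]

theorem card_zeros_weilRestriction {J : Type*} (f : J → MvPolynomial σ R) :
    Nat.card {x : σ → R // ∀ j, eval x (f j) = 0} =
      Nat.card {y : σ × ι → K //
        ∀ jl : J × ι, eval y (weilRestriction b (f jl.1) jl.2) = 0} := by
  let E : (σ × ι → K) ≃ (σ → R) :=
    (Equiv.curry σ ι K).trans (Equiv.piCongrRight fun _ => b.equivFun.symm.toEquiv)
  have hE (y : σ × ι → K) : E y = fun i => ∑ l', y (i, l') • b l' := by
    funext i; simp [E]
  refine (Nat.card_congr (E.subtypeEquiv fun y => ?_)).symm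
  simp only [hE, Prod.forall, eval_weilRestriction, b.forall_coord_eq_zero_iff]

end WeilRestriction

end MvPolynomial

theorem mul_add_mul_lt_of_toNat_ceil_eq_succ {N n s D k : ℕ} (hD : 0 < D)
    (h : ⌈(N : ℚ) * (n - s) / D⌉.toNat = k + 1) : k * D + N * s < n * N := by
  have hlt := Int.lt_ceil.1 (show (k : ℤ) < ⌈(N : ℚ) * (n - s) / D⌉ by omega)
  rw [lt_div_iff₀ (by exact_mod_cast hD)] at hlt
  have : ((k * D + N * s : ℕ) : ℚ) < (n * N : ℕ) := by
    push_cast at hlt ⊢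
    linarith
  exact_mod_cast this

open MvPolynomial in
theorem ring_theoretic_prime_ax_katz_general
    (p : ℕ) (hp : p.Prime) (N : ℕ)
    (R : Type*) [CommRing R] [Fintype R] [CharP R p]
    (hcard : Fintype.card R = p ^ N)
    (n r : ℕ) (hr : 1 ≤ r)
    (f : Fin r → MvPolynomial (Fin n) R)
    (hdeg : ∀ j, 1 ≤ (f j).totalDegree) :
    p ^ (⌈((N : ℚ) * ((n : ℚ) - ∑ j, ((f j).totalDegree : ℚ))) /
          (((Finset.univ.sup fun j => (f j).totalDegree) : ℕ) : ℚ)⌉.toNat) ∣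
      Nat.card {x : Fin n → R // ∀ j, MvPolynomial.eval x (f j) = 0} := by
  have := Fact.mk hp
  set D := univ.sup fun j => (f j).totalDegree
  have hle (j : Fin r) : (f j).totalDegree ≤ D :=
    le_sup (f := fun j => (f j).totalDegree) (mem_univ j)
  have hD : 0 < D := (hdeg ⟨0, hr⟩).trans (hle _)
  cases hβ : ⌈(N : ℚ) * ((n : ℚ) - ∑ j, ((f j).totalDegree : ℚ)) / (D : ℚ)⌉.toNat with
  | zero => exact pow_zero p ▸ one_dvd _
  | succ k =>
  have hkD := mul_add_mul_lt_of_toNat_ceil_eq_succ (s := ∑ j, (f j).totalDegree) hD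
    (by push_cast; exact hβ)
  let : Algebra (ZMod p) R := ZMod.algebra R p
  have hrank : Module.finrank (ZMod p) R = N := by
    have hc := Module.card_eq_pow_finrank (K := ZMod p) (V := R)
    rw [ZMod.card, hcard] at hc
    exact Nat.pow_right_injective hp.two_le hc.symm
  rw [card_zeros_weilRestriction (Module.finBasisOfFinrankEq (ZMod p) R hrank)]
  refine pow_succ_dvd_card_zeros _ (fun jl => (f jl.1).totalDegree) hD
    (fun jl => totalDegree_weilRestriction_le _ _ _) (fun jl => hle jl.1) ?_
  simpa [Fintype.sum_prod_type, ← mul_sum, mul_comm] using hkD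

/-- **Ring-Theoretic Prime Ax-Katz Theorem.** Let `R` be a finite commutative ring of
prime characteristic `p` with `p ^ N` elements, and let `f_1, …, f_r` be multivariate
polynomials over `R` in `n` variables, each of total degree at least `1`. Then
`p ^ max(0, ⌈N (n - ∑ deg f_j) / max_j deg f_j⌉)` divides the number of common zeros. -/
theorem ring_theoretic_prime_ax_katz
    (p : ℕ) (hp : p.Prime) (N : ℕ) (hN : 1 ≤ N)
    (R : Type*) [CommRing R] [Fintype R] [CharP R p]
    (hcard : Fintype.card R = p ^ N)
    (n r : ℕ) (hn : 1 ≤ n) (hr : 1 ≤ r)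
    (f : Fin r → MvPolynomial (Fin n) R)
    (hdeg : ∀ j, 1 ≤ (f j).totalDegree) :
    p ^ (⌈((N : ℚ) * ((n : ℚ) - ∑ j, ((f j).totalDegree : ℚ))) /
          (((Finset.univ.sup fun j => (f j).totalDegree) : ℕ) : ℚ)⌉.toNat) ∣
      Nat.card {x : Fin n → R // ∀ j, MvPolynomial.eval x (f j) = 0} :=
  ring_theoretic_prime_ax_katz_general p hp N R hcard n r hr f hdeg
end

section
/- Let p be a prime, let N, n, r ≥ 1 be integers, and put A := (ℤ/pℤ)^N. For each 1 ≤ j ≤ r let f_j : A^n → A be a nonzero function and let d_j ≥ 1 be an integer with fdeg(f_j) ≤ d_j. Let Z := {x ∈ A^n : f_1(x) = ⋯ = f_r(x) = 0}. Then p^β divides #Z, where β := max(0, ⌈ N·(n − Σ_{j=1}^r d_j) / max_{j=1}^r d_j ⌉). -/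
/-!
Following Ax, write `p · 1_{f = 0} = ∑_{c ∈ 𝔽_p} ψ (c f)` for a primitive additive character `ψ`
of `𝔽_p` with values in `ℤ[ζ_p]`. A difference `Δ_a (ψ ∘ g) = (ψ ∘ g) (ψ ∘ Δ_a g - 1)` produces a
factor divisible by `π = ζ_p - 1` and lowers the degree of `g`, so differences of `ψ ∘ g` of order
`> t d` are divisible by `π ^ (t + 1)`; as `p` is `π ^ (p - 1)` up to a unit, differences of
`1_{f = 0}` of order `> (t + 1) (p - 1) d` are divisible by `p ^ (t + 1)`. Such bounds add up
under products by the Leibniz rule, and summing over `𝔽_p ^ m` acts like a difference of order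
`(p - 1) m`, since `∑_{c < p} u c = ∑_k C(p, k + 1) Δ^k u 0` and `p ∣ C(p, k + 1)` for
`k < p - 1`. The number of common zeros is the sum over `(𝔽_p ^ N) ^ n` of the product of the
indicators of the `r N` coordinate equations `f_j(x)_i = 0`.
-/

/-- The difference operator `Δ_a` sending `f` to `x ↦ f (x + a) - f x`. -/
def disc {A B : Type*} [AddCommGroup A] [AddCommGroup B] (a : A) (f : A → B) : A → B :=
  fun x => f (x + a) - f x

/-- Iterated difference operator `Δ_{a_1} ⋯ Δ_{a_k} f` along a list `[a_1, …, a_k]`. -/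
def multiDisc {A B : Type*} [AddCommGroup A] [AddCommGroup B] : List A → (A → B) → (A → B)
  | [], f => f
  | a :: l, f => disc a (multiDisc l f)

/-- `FdegLE f d` says that the functional degree of `f` is at most `d`, i.e. all
`(d+1)`-fold iterated differences of `f` vanish. -/
def FdegLE {A B : Type*} [AddCommGroup A] [AddCommGroup B] (f : A → B) (d : ℕ) : Prop :=
  ∀ l : List A, l.length = d + 1 → multiDisc l f = 0

open Finset

section MultiDisc

variable {A B C : Type*} [AddCommGroup A] [AddCommGroup B] [AddCommGroup C]

lemma disc_eq_fwdDiff (a : A) (f : A → B) : disc a f = fwdDiff a f := rfl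

lemma multiDisc_append (l₁ l₂ : List A) (f : A → B) :
    multiDisc (l₁ ++ l₂) f = multiDisc l₁ (multiDisc l₂ f) := by
  induction l₁ with
  | nil => rfl
  | cons a l ih => simp only [List.cons_append, multiDisc, ih]

lemma multiDisc_concat (l : List A) (a : A) (f : A → B) :
    multiDisc (l ++ [a]) f = multiDisc l (disc a f) :=
  multiDisc_append l [a] f

lemma multiDisc_replicate (k : ℕ) (a : A) (f : A → B) :
    multiDisc (List.replicate k a) f = (fwdDiff a)^[k] f := by
  induction k with
  | zero => rfl
  | succ k ih => rw [List.replicate_succ, Function.iterate_succ_apply', ← ih]; rfl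

def multiDiscHom (l : List A) : (A → B) →+ (A → B) where
  toFun := multiDisc l
  map_zero' := by
    induction l with
    | nil => rfl
    | cons a l ih => simp only [multiDisc, ih]; funext x; simp [disc]
  map_add' f g := by
    induction l with
    | nil => rfl
    | cons a l ih => simp only [multiDisc, ih, disc_eq_fwdDiff, fwdDiff_add]

@[simp] lemma multiDiscHom_apply (l : List A) (f : A → B) : multiDiscHom l f = multiDisc l f := rfl

@[simp] lemma multiDisc_zero (l : List A) : multiDisc l (0 : A → B) = 0 :=
  map_zero (multiDiscHom l)

lemma multiDisc_const {l : List A} (hl : l ≠ []) (c : B) : multiDisc l (fun _ => c) = 0 := by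
  obtain ⟨l, a, rfl⟩ := (List.eq_nil_or_concat l).resolve_left hl
  rw [List.concat_eq_append, multiDisc_concat, disc_eq_fwdDiff, fwdDiff_const]
  exact multiDisc_zero l

lemma multiDisc_comp_left (φ : B →+ C) (l : List A) (f : A → B) :
    multiDisc l (fun x => φ (f x)) = fun x => φ (multiDisc l f x) := by
  induction l with
  | nil => rfl
  | cons a l ih => funext x; simp only [multiDisc, ih, disc, map_sub]

lemma multiDisc_comp_right (φ : C →+ A) (l : List C) (f : A → B) :
    multiDisc l (fun x => f (φ x)) = fun x => multiDisc (l.map φ) f (φ x) := by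
  induction l with
  | nil => rfl
  | cons a l ih => funext x; simp only [multiDisc, List.map_cons, ih, disc, map_add]

lemma FdegLE.comp_left {f : A → B} {d : ℕ} (hf : FdegLE f d) (φ : B →+ C) :
    FdegLE (fun x => φ (f x)) d := by
  intro l hl
  rw [multiDisc_comp_left, hf l hl]
  funext x
  exact map_zero φ

lemma FdegLE.disc {f : A → B} {d : ℕ} (hf : FdegLE f (d + 1)) (a : A) :
    FdegLE (disc a f) d := by
  intro l hl
  rw [← multiDisc_concat]
  exact hf _ (by simp [hl])

lemma disc_mul {R : Type*} [CommRing R] (a : A) (f g : A → R) :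
    disc a (f * g) = f * disc a g + disc a f * g + disc a f * disc a g := by
  funext x
  simp only [disc, Pi.add_apply, Pi.mul_apply]
  ring

end MultiDisc

lemma ne_nil_of_add_mul_lt_length {α : Type*} {e : ℤ} {t D : ℕ} {l : List α} (he : 0 ≤ e)
    (hl : e + t * D < l.length) : l ≠ [] := by
  rintro rfl
  simp only [List.length_nil, Nat.cast_zero] at hl
  nlinarith

section DiffsDvd

variable {G R : Type*} [AddCommGroup G] [CommRing R]

/-- For differences of order `|l| ≤ n`: the `π`-adic valuation of `Δ_l h` is at least
`⌈(|l| - e) / D⌉`. -/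
def DiffsDvdUpTo (π : R) (e : ℤ) (D n : ℕ) (h : G → R) : Prop :=
  ∀ (t : ℕ) (l : List G), l.length ≤ n → e + t * D < l.length →
    ∀ x, π ^ (t + 1) ∣ multiDisc l h x

def DiffsDvd (π : R) (e : ℤ) (D : ℕ) (h : G → R) : Prop :=
  ∀ n, DiffsDvdUpTo π e D n h

variable {π : R} {e e' : ℤ} {D n : ℕ} {h h' : G → R}

lemma DiffsDvd.dvd (hh : DiffsDvd π e D h) {t : ℕ} {l : List G} (hl : e + t * D < l.length)
    (x : G) : π ^ (t + 1) ∣ multiDisc l h x :=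
  hh l.length t l le_rfl hl x

lemma DiffsDvdUpTo.mono {n' : ℕ} (hh : DiffsDvdUpTo π e D n h) (hn : n' ≤ n) (he : e ≤ e') :
    DiffsDvdUpTo π e' D n' h :=
  fun t l hl hlt => hh t l (hl.trans hn) (by omega)

lemma DiffsDvd.mono {D' : ℕ} (hh : DiffsDvd π e D h) (he : e ≤ e') (hD : D ≤ D') :
    DiffsDvd π e' D' h := by
  intro n t l _ hlt
  refine hh.dvd (lt_of_le_of_lt ?_ hlt)
  have : (t : ℤ) * D ≤ t * D' := by gcongr
  omega

lemma DiffsDvdUpTo.add (hh : DiffsDvdUpTo π e D n h) (hh' : DiffsDvdUpTo π e D n h') :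
    DiffsDvdUpTo π e D n (h + h') := by
  intro t l hl hlt x
  rw [← multiDiscHom_apply, map_add]
  exact dvd_add (hh t l hl hlt x) (hh' t l hl hlt x)

lemma DiffsDvdUpTo.disc (hh : DiffsDvdUpTo π e D (n + 1) h) (a : G) :
    DiffsDvdUpTo π (e - 1) D n (disc a h) := by
  intro t l hl hlt x
  rw [← multiDisc_concat]
  exact hh t _ (by simpa using hl) (by simp; omega) x

lemma DiffsDvd.multiDisc (hh : DiffsDvd π e D h) (l' : List G) :
    DiffsDvd π (e - l'.length) D (multiDisc l' h) := by
  intro n t l _ hlt x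
  rw [← multiDisc_append]
  exact hh.dvd (by simp; omega) x

lemma DiffsDvd.comp {H : Type*} [AddCommGroup H] (hh : DiffsDvd π e D h) (φ : H →+ G) :
    DiffsDvd π e D (fun y => h (φ y)) := by
  intro n t l _ hlt x
  rw [multiDisc_comp_right]
  exact hh.dvd (by simpa using hlt) _

lemma diffsDvd_one : DiffsDvd π 0 D (1 : G → R) := by
  intro n t l _ hlt x
  rw [show (1 : G → R) = fun _ => 1 from rfl,
    multiDisc_const (ne_nil_of_add_mul_lt_length le_rfl hlt)]
  exact dvd_zero _

lemma exists_lt_zero_le_add_mul (hD : 1 ≤ D) (he : e < 0) :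
    ∃ s : ℕ, e + s * D < 0 ∧ 0 ≤ e + (s + 1) * D := by
  have hD' : (0 : ℤ) < D := by exact_mod_cast hD
  refine ⟨((-e - 1) / D).toNat, ?_⟩
  rw [Int.toNat_of_nonneg (Int.ediv_nonneg (by omega) hD'.le)]
  constructor
  · linarith [Int.ediv_mul_le (-e - 1) hD'.ne']
  · linarith [Int.lt_ediv_add_one_mul_self (-e - 1) hD']

lemma pow_succ_dvd_mul_of_forall_pow_succ_dvd (hD : 1 ≤ D) {a b : R}
    (ha : ∀ t : ℕ, e + t * D < 0 → π ^ (t + 1) ∣ a)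
    (hb : ∀ t : ℕ, e' + t * D < 0 → π ^ (t + 1) ∣ b)
    {t : ℕ} (ht : e + e' + t * D < 0) : π ^ (t + 1) ∣ a * b := by
  rcases le_or_gt 0 e with he | he
  · exact dvd_mul_of_dvd_right (hb t (by omega)) a
  rcases le_or_gt 0 e' with he' | he'
  · exact dvd_mul_of_dvd_left (ha t (by omega)) b
  obtain ⟨s, hs, hs_le⟩ := exists_lt_zero_le_add_mul hD he
  obtain ⟨s', hs', hs'_le⟩ := exists_lt_zero_le_add_mul hD he'
  have hts : (t : ℤ) * D < (s + s' + 2 : ℕ) * D := by push_cast; linarith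
  have hts' : t + 1 ≤ (s + 1) + (s' + 1) := by
    have := lt_of_mul_lt_mul_right hts (by positivity)
    omega
  calc π ^ (t + 1) ∣ π ^ (s + 1) * π ^ (s' + 1) := pow_add π _ _ ▸ pow_dvd_pow π hts'
    _ ∣ a * b := mul_dvd_mul (ha s hs) (hb s' hs')

theorem DiffsDvdUpTo.mul (hD : 1 ≤ D) :
    ∀ {n : ℕ} {e e' : ℤ} {F F' : G → R}, DiffsDvdUpTo π e D n F → DiffsDvdUpTo π e' D n F' →
      DiffsDvdUpTo π (e + e') D n (F * F') := by
  intro n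
  induction n with
  | zero =>
    intro e e' F F' hF hF' t l hl hlt x
    obtain rfl := List.eq_nil_of_length_eq_zero (Nat.le_zero.mp hl)
    exact pow_succ_dvd_mul_of_forall_pow_succ_dvd hD (fun s hs => hF s [] le_rfl hs x)
      (fun s hs => hF' s [] le_rfl hs x) hlt
  | succ n ih =>
    intro e e' F F' hF hF' t l hl hlt x
    rcases List.eq_nil_or_concat l with rfl | ⟨l, a, rfl⟩
    · exact pow_succ_dvd_mul_of_forall_pow_succ_dvd hD (fun s hs => hF s [] (Nat.zero_le _) hs x)
        (fun s hs => hF' s [] (Nat.zero_le _) hs x) hlt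
    have hF₀ := hF.mono n.le_succ le_rfl
    have hF'₀ := hF'.mono n.le_succ le_rfl
    have hsum : DiffsDvdUpTo π (e + e' - 1) D n
        (F * _root_.disc a F' + _root_.disc a F * F' + _root_.disc a F * _root_.disc a F') :=
      (((ih hF₀ (hF'.disc a)).mono le_rfl (by omega)).add
        ((ih (hF.disc a) hF'₀).mono le_rfl (by omega))).add
        ((ih (hF.disc a) (hF'.disc a)).mono le_rfl (by omega))
    simp only [List.concat_eq_append, List.length_append, List.length_singleton] at hl hlt
    rw [List.concat_eq_append, multiDisc_concat, disc_mul]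
    exact hsum t l (by omega) (by push_cast at hlt; omega) x

theorem DiffsDvd.mul (hD : 1 ≤ D) (hh : DiffsDvd π e D h) (hh' : DiffsDvd π e' D h') :
    DiffsDvd π (e + e') D (h * h') :=
  fun n => (hh n).mul hD (hh' n)

theorem DiffsDvd.prod {ι : Type*} (s : Finset ι) {e : ι → ℤ} {F : ι → G → R} (hD : 1 ≤ D)
    (hF : ∀ i ∈ s, DiffsDvd π (e i) D (F i)) : DiffsDvd π (∑ i ∈ s, e i) D (∏ i ∈ s, F i) := by
  classical
  induction s using Finset.induction_on with
  | empty => simpa using diffsDvd_one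
  | insert i s hi ih =>
    rw [sum_insert hi, prod_insert hi]
    exact (hF i (mem_insert_self i s)).mul hD (ih fun j hj => hF j (mem_insert_of_mem hj))

end DiffsDvd

section AddChar

variable {G B R : Type*} [AddCommGroup G] [AddCommGroup B] [CommRing R]

lemma disc_addChar_comp (ψ : AddChar B R) (g : G → B) (a : G) :
    disc a (fun x => ψ (g x)) = (fun x => ψ (g x)) * ((fun x => ψ (disc a g x)) - 1) := by
  funext x
  simp only [disc, Pi.mul_apply, Pi.sub_apply, Pi.one_apply, mul_sub, mul_one,
    ← AddChar.map_add_eq_mul, add_sub_cancel]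

lemma DiffsDvd.sub_one {π : R} {d : ℕ} {u : G → R} (hu : DiffsDvd π 0 d u)
    (hu₁ : ∀ x, π ∣ u x - 1) : DiffsDvd π (-1) (d + 1) (u - 1) := by
  intro n t l _ hlt x
  rcases List.eq_nil_or_concat l with rfl | ⟨l', a, rfl⟩
  · obtain rfl : t = 0 := by simp at hlt; nlinarith
    show π ^ (0 + 1) ∣ (u - 1) x
    simpa using hu₁ x
  · rw [← multiDiscHom_apply, map_sub, multiDiscHom_apply, show (1 : G → R) = fun _ => 1 from rfl,
      multiDiscHom_apply, multiDisc_const (by simp), sub_zero]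
    refine hu.dvd ?_ x
    simp only [List.concat_eq_append, List.length_append, List.length_singleton] at hlt ⊢
    rcases Nat.eq_zero_or_pos t with rfl | ht
    · simp
    · push_cast at hlt ⊢
      nlinarith

/-- Each difference `Δ_a` extracts a factor `ψ ∘ Δ_a g - 1 ≡ 0 mod π`, and
`fdeg (Δ_a g) < fdeg g`. -/
theorem diffsDvd_addChar_comp (ψ : AddChar B R) {π : R} (hψ : ∀ b, π ∣ ψ b - 1) :
    ∀ {d : ℕ} {g : G → B}, FdegLE g d → DiffsDvd π 0 d (fun x => ψ (g x)) := by
  intro d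
  induction d with
  | zero =>
    intro g hg n t l _ hlt x
    obtain ⟨l, a, rfl⟩ := (List.eq_nil_or_concat l).resolve_left
      (ne_nil_of_add_mul_lt_length le_rfl hlt)
    have hψga : (fun y => ψ (disc a g y)) - 1 = 0 := by
      funext y
      simp [show disc a g = 0 from hg [a] rfl]
    rw [List.concat_eq_append, multiDisc_concat, disc_addChar_comp, hψga, mul_zero, multiDisc_zero]
    exact dvd_zero _
  | succ d ih =>
    intro g hg n
    induction n with
    | zero =>
      intro t l hl hlt
      exact absurd (List.eq_nil_of_length_eq_zero (Nat.le_zero.mp hl))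
        (ne_nil_of_add_mul_lt_length le_rfl hlt)
    | succ n ihn =>
      intro t l hl hlt x
      obtain ⟨l, a, rfl⟩ := (List.eq_nil_or_concat l).resolve_left
        (ne_nil_of_add_mul_lt_length le_rfl hlt)
      have hprod := ihn.mul (by omega)
        (((ih (hg.disc a)).sub_one fun y => by simpa using hψ _) n)
      simp only [List.concat_eq_append, List.length_append, List.length_singleton] at hl hlt
      rw [List.concat_eq_append, multiDisc_concat, disc_addChar_comp]
      exact hprod t l (by omega) (by push_cast at hlt ⊢; omega) x

end AddChar

section ZeroIndicator

open Classical in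
noncomputable def zeroIndicator {G B : Type*} [Zero B] (f : G → B) : G → ℤ :=
  fun x => if f x = 0 then 1 else 0

open NumberField IsCyclotomicExtension.Rat

variable {p : ℕ} [hp : Fact p.Prime]

theorem pow_succ_dvd_of_zeta_sub_one_pow_dvd_intCast {K : Type*} [Field K] [NumberField K]
    [IsCyclotomicExtension {p} ℚ K] {ζ : K} (hζ : IsPrimitiveRoot ζ p) (k : ℕ) {M : ℤ}
    (h : (hζ.toInteger - 1) ^ ((p - 1) * k + 1) ∣ (M : 𝓞 K)) : (p : ℤ) ^ (k + 1) ∣ M := by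
  induction k generalizing M with
  | zero => simpa using (zeta_sub_one_dvd_intCast_iff' p hζ).mp (by simpa using h)
  | succ k ih =>
    obtain ⟨M, rfl⟩ := (zeta_sub_one_dvd_intCast_iff' p hζ).mp
      (dvd_trans (dvd_pow_self _ (by omega)) h)
    obtain ⟨u, hu⟩ := associated_zeta_sub_one_pow_prime p hζ
    rw [show (p - 1) * (k + 1) + 1 = (p - 1) + ((p - 1) * k + 1) by ring, pow_add, Int.cast_mul,
      Int.cast_natCast, ← hu, mul_assoc] at h
    rw [pow_succ']
    exact mul_dvd_mul_left _ (ih (Units.dvd_mul_left.mp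
      ((mul_dvd_mul_iff_left (pow_ne_zero _ hζ.zeta_sub_one_prime'.ne_zero)).mp h)))

theorem diffsDvd_zeroIndicator {G : Type*} [AddCommGroup G] {f : G → ZMod p} {d : ℕ}
    (hf : FdegLE f d) : DiffsDvd (p : ℤ) ((p - 1) * d : ℕ) ((p - 1) * d) (zeroIndicator f) := by
  classical
  have : NeZero (p : ℚ) := ⟨by exact_mod_cast hp.out.ne_zero⟩
  -- not found by instance search: it is stated for another `Algebra ℚ (CyclotomicField p ℚ)`
  have : IsCyclotomicExtension {p} ℚ (CyclotomicField p ℚ) :=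
    CyclotomicField.isCyclotomicExtension p ℚ
  have hζ := IsCyclotomicExtension.zeta_spec p ℚ (CyclotomicField p ℚ)
  let ψ := AddChar.zmodChar p hζ.toInteger_isPrimitiveRoot.pow_eq_one
  have hψ : ∀ a, hζ.toInteger - 1 ∣ ψ a - 1 := fun a => by
    simpa [ψ, AddChar.zmodChar_apply] using sub_dvd_pow_sub_pow hζ.toInteger 1 a.val
  let φ : ℤ →+ 𝓞 (CyclotomicField p ℚ) := (Int.castAddHom _).comp (AddMonoidHom.mulLeft (p : ℤ))
  have horth : (fun x => φ (zeroIndicator f x)) = ∑ c : ZMod p, fun x => ψ (c * f x) := by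
    funext x
    rw [Finset.sum_apply, AddChar.sum_mulShift _
      (AddChar.zmodChar_primitive_of_primitive_root p hζ.toInteger_isPrimitiveRoot)]
    by_cases hx : f x = 0 <;> simp [φ, zeroIndicator, hx]
  intro n t l _ hlt x
  have hdvd : (hζ.toInteger - 1) ^ ((p - 1) * (t + 1) + 1) ∣
      ((p * multiDisc l (zeroIndicator f) x : ℤ) : 𝓞 (CyclotomicField p ℚ)) := by
    have hx := congrFun (congrArg (multiDisc l) horth) x
    rw [multiDisc_comp_left, ← multiDiscHom_apply l (∑ c : ZMod p, _), map_sum,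
      Finset.sum_apply] at hx
    simp only [φ, AddMonoidHom.coe_comp, Function.comp_apply, AddMonoidHom.coe_mulLeft,
      Int.coe_castAddHom] at hx
    rw [hx]
    refine Finset.dvd_sum fun c _ =>
      (diffsDvd_addChar_comp ψ hψ (hf.comp_left (AddMonoidHom.mulLeft c))).dvd ?_ x
    push_cast at hlt ⊢
    nlinarith
  have := pow_succ_dvd_of_zeta_sub_one_pow_dvd_intCast hζ (t + 1) hdvd
  rw [pow_succ'] at this
  exact (mul_dvd_mul_iff_left (by exact_mod_cast hp.out.ne_zero)).mp this

end ZeroIndicator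

section Sum

theorem sum_range_shift_eq_sum_choose_fwdDiff_iter {M G : Type*} [AddCommMonoid M] [AddCommGroup G]
    (f : M → G) (a y : M) (n : ℕ) :
    ∑ i ∈ range n, f (y + i • a) = ∑ k ∈ range n, n.choose (k + 1) • (fwdDiff a)^[k] f y := by
  induction n with
  | zero => simp
  | succ n ih =>
    rw [sum_range_succ, ih, shift_eq_sum_fwdDiff_iter a f n y]
    simp only [Nat.choose_succ_succ', add_smul, sum_add_distrib]
    rw [sum_range_succ (fun k => n.choose (k + 1) • _) n, Nat.choose_succ_self, zero_smul,
      add_zero, add_comm]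

lemma sum_zmod_val_eq_sum_range {p : ℕ} [NeZero p] {M : Type*} [AddCommMonoid M] (g : ℕ → M) :
    ∑ c : ZMod p, g c.val = ∑ i ∈ range p, g i :=
  sum_nbij' (fun c => c.val) (fun i => (i : ZMod p)) (fun c _ => by simp [ZMod.val_lt])
    (fun _ _ => mem_univ _) (fun c _ => by simp)
    (fun i hi => by simp [ZMod.val_natCast, Nat.mod_eq_of_lt (mem_range.mp hi)]) (fun _ _ => rfl)

def consZeroHom (M : Type*) [AddCommMonoid M] (m : ℕ) : (Fin m → M) →+ (Fin (m + 1) → M) where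
  toFun y := Fin.cons 0 y
  map_zero' := by ext i; refine Fin.cases ?_ ?_ i <;> simp
  map_add' y z := by ext i; refine Fin.cases ?_ ?_ i <;> simp

lemma sum_fin_succ_eq_sum_choose {p : ℕ} [NeZero p] {R : Type*} [AddCommGroup R] {m : ℕ}
    (h : (Fin (m + 1) → ZMod p) → R) :
    ∑ x, h x = ∑ k ∈ range p, p.choose (k + 1) •
      ∑ y, (fwdDiff (Pi.single 0 1))^[k] h (consZeroHom (ZMod p) m y) := by
  have hcons : ∀ (c : ZMod p) y, (Fin.cons c y : Fin (m + 1) → ZMod p) =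
      consZeroHom (ZMod p) m y + c.val • Pi.single 0 1 := by
    intro c y
    ext i
    refine Fin.cases ?_ ?_ i
    · show c = (Fin.cons 0 y : Fin (m + 1) → ZMod p) 0 +
        c.val • (Pi.single 0 1 : Fin (m + 1) → ZMod p) 0
      rw [Fin.cons_zero, Pi.single_eq_same, nsmul_eq_mul, mul_one, ZMod.natCast_zmod_val, zero_add]
    · simp [consZeroHom]
  calc ∑ x, h x = ∑ y, ∑ c : ZMod p, h (Fin.cons c y) := by
        rw [← (Fin.consEquiv _).sum_comp, Fintype.sum_prod_type, sum_comm]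
        rfl
    _ = ∑ y, ∑ i ∈ range p, h (consZeroHom (ZMod p) m y + i • Pi.single 0 1) := by
        refine sum_congr rfl fun y _ => ?_
        simp only [hcons]
        exact sum_zmod_val_eq_sum_range (p := p)
          (fun i => h (consZeroHom (ZMod p) m y + i • Pi.single 0 1))
    _ = _ := by
        simp only [sum_range_shift_eq_sum_choose_fwdDiff_iter, smul_sum]
        exact sum_comm

variable {p : ℕ} [hp : Fact p.Prime]

/-- Summing over one coordinate acts like `p - 1` differences: by Newton's formula
`∑_{c < p} u c = ∑_{k < p} C(p, k + 1) Δ^k u 0`, and `p ∣ C(p, k + 1)` unless `k = p - 1`. -/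
theorem pow_succ_dvd_sum_fin_of_diffsDvd {R : Type*} [CommRing R] {D : ℕ} (hD : p - 1 ≤ D) :
    ∀ {m : ℕ} {e : ℤ} {h : (Fin m → ZMod p) → R}, DiffsDvd (p : R) e D h →
      ∀ {t : ℕ}, e + t * D < ((p - 1) * m : ℕ) → (p : R) ^ (t + 1) ∣ ∑ x, h x := by
  intro m
  induction m with
  | zero =>
    intro e h hh t ht
    rw [Fintype.sum_unique]
    exact hh.dvd (l := []) (by simpa using ht) _
  | succ m ih =>
    intro e h hh t ht
    rw [sum_fin_succ_eq_sum_choose]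
    refine dvd_sum fun k hk => ?_
    have hk' : DiffsDvd (p : R) (e - k) D
        (fun y => (fwdDiff (Pi.single 0 1))^[k] h (consZeroHom (ZMod p) m y)) := by
      simpa [multiDisc_replicate] using
        (hh.multiDisc (List.replicate k (Pi.single 0 1))).comp (consZeroHom (ZMod p) m)
    have hp1 := hp.out.one_lt
    rcases Nat.lt_or_ge (k + 1) p with hkp | hkp
    · obtain ⟨c, hc⟩ := hp.out.dvd_choose_self k.succ_ne_zero hkp
      rw [nsmul_eq_mul, hc, Nat.cast_mul, pow_succ', mul_assoc]
      refine mul_dvd_mul_left _ ?_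
      rcases t with _ | t
      · simp
      · refine dvd_mul_of_dvd_right (ih hk' ?_) _
        push_cast [Nat.sub_add_cancel hp1.le] at ht ⊢
        nlinarith
    · obtain rfl : k = p - 1 := by have := mem_range.mp hk; omega
      rw [nsmul_eq_mul]
      refine dvd_mul_of_dvd_right (ih hk' ?_) _
      push_cast [Nat.sub_add_cancel hp1.le] at ht ⊢
      linarith

theorem pow_succ_dvd_sum_of_diffsDvd {G R : Type*} [AddCommGroup G] [Module (ZMod p) G] [Fintype G]
    [CommRing R] {D : ℕ} (hD : p - 1 ≤ D) {e : ℤ} {h : G → R} (hh : DiffsDvd (p : R) e D h)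
    {t : ℕ} (ht : e + t * D < ((p - 1) * Module.finrank (ZMod p) G : ℕ)) :
    (p : R) ^ (t + 1) ∣ ∑ x, h x := by
  let b := (Module.finBasis (ZMod p) G).equivFun.symm
  rw [← b.toEquiv.sum_comp]
  exact pow_succ_dvd_sum_fin_of_diffsDvd hD (hh.comp b.toLinearMap.toAddMonoidHom) ht

end Sum

lemma natCard_eq_sum_prod_zeroIndicator {G ι B : Type*} [Fintype G] [Fintype ι] [Zero B]
    (F : ι → G → B) : (Nat.card {x // ∀ i, F i x = 0} : ℤ) = ∑ x, (∏ i, zeroIndicator (F i)) x := by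
  classical
  simp [Finset.prod_apply, zeroIndicator, Finset.prod_ite_zero, Finset.sum_boole,
    Nat.card_eq_fintype_card, Fintype.card_subtype]

lemma pos_and_mul_lt_of_ceil_div_toNat_eq_succ {a : ℚ} {b t : ℕ} (h : ⌈a / b⌉.toNat = t + 1) :
    0 < b ∧ t * b < a := by
  have hta : (t : ℚ) < a / b := Int.lt_ceil.mp (Int.lt_toNat.mp (by omega))
  have hb : 0 < b := by
    by_contra! hb
    simp [Nat.le_zero.mp hb] at hta
    linarith
  exact ⟨hb, (lt_div_iff₀ (by exact_mod_cast hb)).mp hta⟩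

theorem pow_succ_dvd_card_common_zeros {p : ℕ} [hp : Fact p.Prime] {G ι : Type*} [AddCommGroup G] [Module (ZMod p) G]
    [Fintype G] [Fintype ι] {F : ι → G → ZMod p} {d : ι → ℕ} {D t : ℕ}
    (hF : ∀ i, FdegLE (F i) (d i)) (hdD : ∀ i, d i ≤ D) (hD : 0 < D)
    (ht : ∑ i, d i + t * D < Module.finrank (ZMod p) G) :
    p ^ (t + 1) ∣ Nat.card {x // ∀ i, F i x = 0} := by
  have hp1 : 0 < p - 1 := by have := hp.out.two_le; omega
  have hH := DiffsDvd.prod univ (Nat.mul_pos hp1 hD) fun i _ =>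
    (diffsDvd_zeroIndicator (hF i)).mono le_rfl (Nat.mul_le_mul_left _ (hdD i))
  rw [← Int.natCast_dvd_natCast, natCard_eq_sum_prod_zeroIndicator]
  push_cast
  refine pow_succ_dvd_sum_of_diffsDvd (Nat.le_mul_of_pos_right _ hD) hH ?_
  have := Nat.mul_lt_mul_of_pos_left ht hp1
  rw [mul_add, mul_sum, ← mul_assoc, mul_comm _ t, mul_assoc] at this
  exact_mod_cast this

theorem group_theoretic_prime_ax_katz_general
    (p : ℕ) (hp : p.Prime) (N n r : ℕ)
    (f : Fin r → ((Fin n → (Fin N → ZMod p)) → (Fin N → ZMod p)))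
    (d : Fin r → ℕ)
    (hfd : ∀ j, FdegLE (f j) (d j)) :
    p ^ (⌈((N : ℚ) * ((n : ℚ) - ∑ j, (d j : ℚ))) /
          (((Finset.univ.sup d) : ℕ) : ℚ)⌉.toNat) ∣
      Nat.card {x : Fin n → (Fin N → ZMod p) // ∀ j, f j x = 0} := by
  have := Fact.mk hp
  set q : ℚ := N * (n - ∑ j, (d j : ℚ)) / (univ.sup d : ℕ)
  rcases hq : ⌈q⌉.toNat with _ | t
  · simp
  obtain ⟨hD, hlt⟩ := pos_and_mul_lt_of_ceil_div_toNat_eq_succ hq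
  rw [← Nat.card_congr (Equiv.subtypeEquivRight
    (p := fun x => ∀ ji : Fin r × Fin N, f ji.1 x ji.2 = 0) fun x => by simp [funext_iff])]
  refine pow_succ_dvd_card_common_zeros (F := fun (ji : Fin r × Fin N) x => f ji.1 x ji.2)
    (fun ji => (hfd ji.1).comp_left (Pi.evalAddMonoidHom _ ji.2)) (fun ji => le_sup (mem_univ ji.1))
    hD ?_
  simp only [Module.finrank_pi_fintype, Module.finrank_self, sum_const, card_univ,
    Fintype.card_fin, smul_eq_mul, mul_one, Fintype.sum_prod_type]
  rw [← Nat.cast_lt (α := ℚ)]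
  push_cast [← mul_sum]
  linarith

/-- **Group-Theoretic Prime Ax-Katz Theorem.** Let `A = (ℤ/pℤ)^N` and for `1 ≤ j ≤ r` let
`f_j : A^n → A` be a nonzero function of functional degree at most `d_j ≥ 1`. Then
`p ^ max(0, ⌈N (n - ∑_j d_j) / max_j d_j⌉)` divides the number of common zeros. -/
theorem group_theoretic_prime_ax_katz
    (p : ℕ) (hp : p.Prime) (N n r : ℕ) (hN : 1 ≤ N) (hn : 1 ≤ n) (hr : 1 ≤ r)
    (f : Fin r → ((Fin n → (Fin N → ZMod p)) → (Fin N → ZMod p)))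
    (hf0 : ∀ j, f j ≠ 0)
    (d : Fin r → ℕ) (hd : ∀ j, 1 ≤ d j)
    (hfd : ∀ j, FdegLE (f j) (d j)) :
    p ^ (⌈((N : ℚ) * ((n : ℚ) - ∑ j, (d j : ℚ))) /
          (((Finset.univ.sup d) : ℕ) : ℚ)⌉.toNat) ∣
      Nat.card {x : Fin n → (Fin N → ZMod p) // ∀ j, f j x = 0} :=
  group_theoretic_prime_ax_katz_general p hp N n r f d hfd
end
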